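/- arXiv:1307.8425 — 8 statements merged into one kernel-verified Lean document; each statement's English description precedes it below -/
import Mathlib

section
/- For real α with cos(α) < 1 and any integer r > 2/(1 − cos(α)), the polynomial (x² − 2cos(α)·x + 1)·(1 + x)^r has all coefficients nonnegative. -/
/-!
Write `F_α = (1 + X)² - 2(1 + cos α) X`. The coefficient of `X^(j+1)` in `F_α (1 + X)^r` is then
`C(r+2, j+1) - 2(1 + cos α) C(r, j)`, and
`C(r+2, j+1) / C(r, j) = (r+2)(r+1) / ((j+1)(r+1-j)) ≥ 4(r+1)/(r+2)` by AM-GM.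
This is at least `2(1 + cos α)` exactly when `cos α (r+2) ≤ r`, which `r (1 - cos α) > 2` guarantees.
-/

open Polynomial

namespace Nat

theorem choose_add_two_succ_mul (r j : ℕ) :
    (r + 2).choose (j + 1) * ((j + 1) * (r + 1 - j)) = (r + 2) * (r + 1) * r.choose j := by
  calc (r + 2).choose (j + 1) * ((j + 1) * (r + 1 - j))
      = (r + 2).choose (j + 1) * (j + 1) * (r + 1 - j) := by ring
    _ = (r + 2) * ((r + 1).choose j * (r + 1 - j)) := by rw [← add_one_mul_choose_eq]; ring
    _ = (r + 2) * (r + 1) * r.choose j := by rw [← choose_mul_succ_eq]; ring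

theorem four_mul_succ_mul_choose_le (r j : ℕ) :
    4 * (r + 1) * r.choose j ≤ (r + 2) * (r + 2).choose (j + 1) := by
  have amgm : 4 * ((j + 1) * (r + 1 - j)) ≤ (r + 2) ^ 2 := by
    rcases le_or_gt j (r + 1) with hj | hj
    · calc 4 * ((j + 1) * (r + 1 - j)) = 4 * (j + 1) * (r + 1 - j) := by ring
        _ ≤ (j + 1 + (r + 1 - j)) ^ 2 := four_mul_le_sq_add _ _
        _ = (r + 2) ^ 2 := by congr 1; omega
    · simp [Nat.sub_eq_zero_of_le hj.le]
  refine Nat.le_of_mul_le_mul_left ?_ (show 0 < r + 2 by omega)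
  calc (r + 2) * (4 * (r + 1) * r.choose j)
      = (r + 2).choose (j + 1) * (4 * ((j + 1) * (r + 1 - j))) := by
        rw [mul_left_comm _ 4, choose_add_two_succ_mul]; ring
    _ ≤ (r + 2).choose (j + 1) * (r + 2) ^ 2 := Nat.mul_le_mul_left _ amgm
    _ = (r + 2) * ((r + 2) * (r + 2).choose (j + 1)) := by ring

end Nat

theorem mul_choose_le_choose_add_two {K : Type*} [Field K] [LinearOrder K] [IsStrictOrderedRing K]
    {a : K} {r : ℕ} (ha : a * (r + 2) ≤ 4 * (r + 1)) (j : ℕ) :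
    a * r.choose j ≤ (r + 2).choose (j + 1) := by
  have key : (4 * (r + 1) * r.choose j : K) ≤ (r + 2) * (r + 2).choose (j + 1) := by
    exact_mod_cast Nat.four_mul_succ_mul_choose_le r j
  refine le_of_mul_le_mul_left ?_ (show (0 : K) < r + 2 by positivity)
  calc (r + 2) * (a * r.choose j) = a * (r + 2) * r.choose j := by ring
    _ ≤ 4 * (r + 1) * r.choose j := by gcongr
    _ ≤ (r + 2) * (r + 2).choose (j + 1) := key

theorem coeff_one_add_X_sq_sub_C_mul_X_mul_pow_succ {R : Type*} [CommRing R] (a : R) (r j : ℕ) :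
    (((1 + X) ^ 2 - C a * X) * (1 + X) ^ r).coeff (j + 1) =
      (r + 2).choose (j + 1) - a * r.choose j := by
  rw [sub_mul, ← pow_add, mul_assoc, coeff_sub, coeff_C_mul, coeff_X_mul, add_comm 2,
    coeff_one_add_X_pow, coeff_one_add_X_pow]

theorem F_alpha_times_power_nonneg_coeffs (α : ℝ) (hα : Real.cos α < 1)
    (r : ℕ) (hr : (r : ℝ) > 2 / (1 - Real.cos α)) (k : ℕ) :
    0 ≤ (((X : ℝ[X]) ^ 2 - C (2 * Real.cos α) * X + 1) * (1 + X) ^ r).coeff k := by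
  set c := Real.cos α
  have hcr : 2 * (1 + c) * (r + 2) ≤ 4 * (r + 1) := by
    have : 2 < r * (1 - c) := (div_lt_iff₀ (by linarith)).mp hr
    linarith
  have hF : (X : ℝ[X]) ^ 2 - C (2 * c) * X + 1 = (1 + X) ^ 2 - C (2 * (1 + c)) * X := by
    simp only [map_mul, map_add, map_one, map_ofNat]
    ring
  rw [hF]
  cases k with
  | zero => simp [mul_coeff_zero, coeff_one_add_X_pow]
  | succ j =>
    rw [coeff_one_add_X_sq_sub_C_mul_X_mul_pow_succ, sub_nonneg]
    exact mul_choose_le_choose_add_two hcr j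
end

section
/- For every integer r ≥ 0 and every integer k with 0 ≤ k ≤ r, one has C(r, k+1) + C(r, k−1) ≥ (2r/(r+2))·C(r, k), where C(n,m) denotes the binomial coefficient (with the convention C(r,−1) = C(r,r+1) = 0). -/
/-!
Writing `C = C(r, k)`, the neighbouring coefficients are `C(r, k+1) = C (r-k)/(k+1)` and
`C(r, k-1) = C k/(r-k+1)`, so the claim reduces to the inequality
`(r-k)/(k+1) + k/(r-k+1) ≥ 2r/(r+2)` between real numbers. With `a = k+1`, `b = r-k+1` and
`s = a+b = r+2`, clearing denominators leaves `(s-1)(a-b)² ≥ 0`.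
-/

theorem Nat.cast_choose_succ_right_mul (R : Type*) [CommRing R] (n k : ℕ) :
    (n.choose (k + 1) : R) * (k + 1) = n.choose k * (n - k) := by
  rcases le_or_gt k n with hkn | hnk
  · have h := congrArg (Nat.cast (R := R)) (Nat.choose_succ_right_eq n k)
    push_cast [Nat.cast_sub hkn] at h
    exact h
  · simp [Nat.choose_eq_zero_of_lt hnk, Nat.choose_eq_zero_of_lt (Nat.lt_succ_of_lt hnk)]

theorem Nat.cast_choose_succ_right_eq_div {K : Type*} [Field K] [CharZero K] (n k : ℕ) :
    (n.choose (k + 1) : K) = n.choose k * (n - k) / (k + 1) :=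
  eq_div_of_mul_eq (Nat.cast_add_one_ne_zero k) (Nat.cast_choose_succ_right_mul K n k)

theorem Nat.ite_cast_choose_pred_eq_div {K : Type*} [Field K] [CharZero K] {n k : ℕ}
    (hk : k ≤ n) :
    (if k = 0 then 0 else (n.choose (k - 1) : K)) = n.choose k * k / (n - k + 1) := by
  cases k with
  | zero => simp
  | succ j =>
    have hden : (n : K) - (j + 1 : ℕ) + 1 = (n - j : ℕ) := by
      push_cast [Nat.cast_sub (Nat.le_of_succ_le hk)]
      ring
    rw [if_neg j.succ_ne_zero, Nat.add_sub_cancel, hden, eq_div_iff (by norm_cast; omega),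
      ← hden]
    push_cast
    linear_combination (Nat.cast_choose_succ_right_mul K n j).symm

theorem two_mul_div_add_two_le_sub_div_add_div {r k : ℝ} (hk : 0 ≤ k) (hkr : k ≤ r) :
    2 * r / (r + 2) ≤ (r - k) / (k + 1) + k / (r - k + 1) := by
  have hr : 0 < r + 2 := by linarith
  have ha : 0 < k + 1 := by linarith
  have hb : 0 < r - k + 1 := by linarith
  rw [div_add_div _ _ ha.ne' hb.ne', div_le_div_iff₀ hr (mul_pos ha hb)]
  nlinarith [mul_nonneg (by linarith : (0 : ℝ) ≤ r + 1) (sq_nonneg (r - 2 * k))]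

theorem binomial_coefficient_inequality (r k : ℕ) (hk : k ≤ r) :
    ((r.choose (k + 1) : ℝ) + (if k = 0 then 0 else (r.choose (k - 1) : ℝ)))
      ≥ (2 * r / (r + 2)) * (r.choose k : ℝ) := by
  rw [ge_iff_le, Nat.cast_choose_succ_right_eq_div, Nat.ite_cast_choose_pred_eq_div hk]
  have hkr : (k : ℝ) ≤ r := by exact_mod_cast hk
  calc (2 * r / (r + 2) : ℝ) * r.choose k
      ≤ ((r - k) / (k + 1) + k / (r - k + 1) : ℝ) * r.choose k :=
        mul_le_mul_of_nonneg_right (two_mul_div_add_two_le_sub_div_add_div k.cast_nonneg hkr)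
          (by positivity)
    _ = _ := by ring
end

section
/- Let N be a positive integer and 0 < α < π/(N+2). Suppose P and Q are polynomials in one variable with nonnegative real coefficients, Q ≠ 0, and P(x) = (x² − 2cos(α)x + 1)·Q(x) as polynomials. Then deg(Q) > N. -/
/-!
The unit complex number `z = exp(iα)` is a root of `x² − 2cos(α)x + 1`, hence of `P`. Taking
imaginary parts, `∑ₖ pₖ sin(kα) = 0`. If `deg Q ≤ N`, then `deg P ≤ N + 2`, so every angle `kα`
with `pₖ ≠ 0` lies in `[0, π)`: all terms are nonnegative and the leading one, with
`0 < (deg P) α < π`, is strictly positive — a contradiction.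
-/

open Polynomial

namespace Polynomial

theorem im_aeval_exp_mul_I (p : ℝ[X]) (θ : ℝ) :
    (aeval (Complex.exp (θ * Complex.I)) p).im =
      ∑ k ∈ Finset.range (p.natDegree + 1), p.coeff k * Real.sin (k * θ) := by
  rw [aeval_eq_sum_range, Complex.im_sum]
  refine Finset.sum_congr rfl fun k _ => ?_
  rw [← Complex.exp_nat_mul, Complex.real_smul, Complex.im_ofReal_mul,
    show (k : ℂ) * (θ * Complex.I) = ((k * θ : ℝ) : ℂ) * Complex.I by push_cast; ring,
    Complex.exp_ofReal_mul_I_im]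

theorem aeval_exp_mul_I_eq_zero (θ : ℝ) :
    aeval (Complex.exp (θ * Complex.I)) ((X : ℝ[X]) ^ 2 - C (2 * Real.cos θ) * X + 1) = 0 := by
  simp only [map_add, map_sub, map_mul, map_pow, aeval_X, aeval_C, map_one,
    Complex.exp_mul_I, Complex.coe_algebraMap, Complex.ofReal_cos]
  push_cast
  linear_combination Complex.sin (θ : ℂ) ^ 2 * Complex.I_sq - Complex.sin_sq_add_cos_sq (θ : ℂ)

theorem natDegree_X_sq_sub_C_mul_X_add_one (b : ℝ) :
    ((X : ℝ[X]) ^ 2 - C b * X + 1).natDegree = 2 := by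
  compute_degree!

theorem im_aeval_exp_mul_I_pos {p : ℝ[X]} (hp : ∀ k, 0 ≤ p.coeff k) (hp0 : p ≠ 0)
    (hdeg : 0 < p.natDegree) {θ : ℝ} (hθ0 : 0 < θ) (hθ : p.natDegree * θ < Real.pi) :
    0 < (aeval (Complex.exp (θ * Complex.I)) p).im := by
  have hangle : ∀ k ≤ p.natDegree, (k : ℝ) * θ ≤ p.natDegree * θ := fun k hk =>
    mul_le_mul_of_nonneg_right (by exact_mod_cast hk) hθ0.le
  rw [im_aeval_exp_mul_I]
  refine Finset.sum_pos' (fun k hk => mul_nonneg (hp k) ?_) ⟨p.natDegree, by simp, ?_⟩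
  · exact Real.sin_nonneg_of_nonneg_of_le_pi (by positivity)
      ((hangle k (Finset.mem_range_succ_iff.mp hk)).trans hθ.le)
  · have hlead : 0 < p.coeff p.natDegree :=
      (hp _).lt_of_ne (leadingCoeff_ne_zero.mpr hp0).symm
    exact mul_pos hlead (Real.sin_pos_of_pos_of_lt_pi (by positivity) hθ)

end Polynomial

theorem denominator_degree_bound_general (N : ℕ) (α : ℝ)
    (hα0 : 0 < α) (hα : α < Real.pi / (N + 2))
    (P Q : ℝ[X])
    (hP : ∀ k, 0 ≤ P.coeff k) (hQ0 : Q ≠ 0)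
    (hPQ : P = ((X : ℝ[X]) ^ 2 - C (2 * Real.cos α) * X + 1) * Q) :
    Q.natDegree > N := by
  by_contra! hle
  have hF0 : (X : ℝ[X]) ^ 2 - C (2 * Real.cos α) * X + 1 ≠ 0 :=
    ne_zero_of_natDegree_gt (n := 0) (by rw [natDegree_X_sq_sub_C_mul_X_add_one]; norm_num)
  have hP0 : P ≠ 0 := hPQ ▸ mul_ne_zero hF0 hQ0
  have hdeg : P.natDegree = Q.natDegree + 2 := by
    rw [hPQ, natDegree_mul hF0 hQ0, natDegree_X_sq_sub_C_mul_X_add_one]; ring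
  have hθ : P.natDegree * α < Real.pi := calc
    (P.natDegree : ℝ) * α ≤ (N + 2) * α := by
      gcongr; exact_mod_cast (by omega : P.natDegree ≤ N + 2)
    _ < Real.pi := by rwa [← lt_div_iff₀' (by positivity)]
  have hroot : aeval (Complex.exp (α * Complex.I)) P = 0 := by
    rw [hPQ, map_mul, aeval_exp_mul_I_eq_zero, zero_mul]
  simpa [hroot] using im_aeval_exp_mul_I_pos hP hP0 (by omega) hα0 hθ

theorem denominator_degree_bound (N : ℕ) (hN : 0 < N) (α : ℝ)
    (hα0 : 0 < α) (hα : α < Real.pi / (N + 2))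
    (P Q : ℝ[X])
    (hP : ∀ k, 0 ≤ P.coeff k) (hQ : ∀ k, 0 ≤ Q.coeff k) (hQ0 : Q ≠ 0)
    (hPQ : P = ((X : ℝ[X]) ^ 2 - C (2 * Real.cos α) * X + 1) * Q) :
    Q.natDegree > N :=
  denominator_degree_bound_general N α hα0 hα P Q hP hQ0 hPQ
end

section
/- Let Q(x) = Σ_{k=0}^{N} q_k x^k be a polynomial with nonnegative coefficients, q_0 > 0, and let 0 < α < π/(N+2). If for all k (with q_k = 0 for k < 0 or k > N) one has q_k − 2cos(α)q_{k−1} + q_{k−2} ≥ 0, then for every m ∈ {1, …, N+1}, q_m ≥ (sin((m+1)α)/sin(mα))·q_{m−1}; in particular q_{N+1} > 0, a contradiction, so no such Q of degree ≤ N exists. -/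
/-!
With `s k = sin (k α)`, which satisfies `s (k+2) = 2 cos α · s (k+1) - s k`, the Casoratian
`D k = s k · q k - s (k+1) · q (k-1)` of `s` and `q` satisfies
`D (k+1) - D k = s (k+1) · (q (k+1) - 2 cos α · q k + q (k-1)) ≥ 0` while `s (k+1) ≥ 0`.
Since `D 0 = 0`, we get `D k ≥ 0` for `k ≤ N + 1`, which is the ratio bound, and it propagates
`q 0 > 0` up to `q (N+1) > 0`.
-/

open Real

theorem sin_add_two_mul_eq (x α : ℝ) :
    sin ((x + 2) * α) = 2 * cos α * sin ((x + 1) * α) - sin (x * α) := by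
  rw [show (x + 2) * α = (x + 1) * α + α by ring, show x * α = (x + 1) * α - α by ring,
    sin_add, sin_sub]
  ring

def casoratian (s q : ℤ → ℝ) (k : ℤ) : ℝ :=
  s k * q k - s (k + 1) * q (k - 1)

section Casoratian

variable {s q : ℤ → ℝ} {c : ℝ}

theorem casoratian_le_succ {k : ℤ} (hs_rec : s (k + 2) = 2 * c * s (k + 1) - s k)
    (hs : 0 ≤ s (k + 1)) (hq : 0 ≤ q (k + 1) - 2 * c * q k + q (k - 1)) :
    casoratian s q k ≤ casoratian s q (k + 1) := by
  rw [casoratian, casoratian, add_sub_cancel_right, show k + 1 + 1 = k + 2 by ring, hs_rec]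
  nlinarith [mul_nonneg hs hq]

theorem casoratian_le_of_le {a b : ℤ} (hab : a ≤ b)
    (hs_rec : ∀ k, s (k + 2) = 2 * c * s (k + 1) - s k)
    (hs : ∀ k, a ≤ k → k < b → 0 ≤ s (k + 1))
    (hq : ∀ k, 0 ≤ q k - 2 * c * q (k - 1) + q (k - 2)) :
    casoratian s q a ≤ casoratian s q b := by
  induction b, hab using Int.leInduction with
  | base => exact le_rfl
  | succ k hak ih =>
    refine (ih fun j hj hjk => hs j hj (by omega)).trans (casoratian_le_succ (hs_rec k)
      (hs k hak (by omega)) ?_)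
    simpa only [add_sub_cancel_right, show k + 1 - 2 = k - 1 by ring] using hq (k + 1)

theorem pos_of_casoratian_nonneg {b : ℤ} (hq0 : 0 < q 0)
    (hs : ∀ k, 1 ≤ k → k ≤ b + 1 → 0 < s k)
    (hD : ∀ k, 1 ≤ k → k ≤ b → 0 ≤ casoratian s q k) :
    ∀ k, 0 ≤ k → k ≤ b → 0 < q k := by
  intro k hk
  induction k, hk using Int.leInduction with
  | base => exact fun _ => hq0
  | succ k hk ih =>
    intro hkb
    have hD' := hD (k + 1) (by omega) hkb
    rw [casoratian, add_sub_cancel_right] at hD'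
    have hprod : 0 < s (k + 1) * q (k + 1) :=
      (mul_pos (hs (k + 1 + 1) (by omega) (by omega)) (ih (by omega))).trans_le (by linarith)
    exact pos_of_mul_pos_right hprod (hs (k + 1) (by omega) (by omega)).le

end Casoratian

theorem no_low_degree_denominator_general (N : ℕ) (α : ℝ)
    (hα0 : 0 < α) (hα : α < Real.pi / (N + 2))
    (q : ℤ → ℝ)
    (h0 : 0 < q 0)
    (hneg : ∀ k : ℤ, k < 0 → q k = 0)
    (hbig : ∀ k : ℤ, (N : ℤ) < k → q k = 0)
    (hconv : ∀ k : ℤ, q k - 2 * Real.cos α * q (k - 1) + q (k - 2) ≥ 0) :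
    (∀ m : ℤ, 1 ≤ m → m ≤ (N : ℤ) + 1 →
      q m ≥ (Real.sin (((m : ℝ) + 1) * α) / Real.sin ((m : ℝ) * α)) * q (m - 1))
    ∧ False := by
  let s : ℤ → ℝ := fun k => sin (k * α)
  have hs_pos : ∀ k : ℤ, 1 ≤ k → k ≤ N + 1 + 1 → 0 < s k := by
    intro k hk1 hk
    have hk1' : (1 : ℝ) ≤ k := by exact_mod_cast hk1
    have hk' : (k : ℝ) ≤ N + 2 := by exact_mod_cast (by omega : k ≤ (N : ℤ) + 2)
    have hπ : (N + 2) * α < π := (lt_div_iff₀' (by positivity)).1 hα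
    exact sin_pos_of_pos_of_lt_pi (by positivity) (by nlinarith)
  have hs_rec : ∀ k, s (k + 2) = 2 * cos α * s (k + 1) - s k := fun k => by
    simp only [s, Int.cast_add, Int.cast_ofNat, Int.cast_one]
    exact sin_add_two_mul_eq _ _
  have hD : ∀ k : ℤ, 1 ≤ k → k ≤ N + 1 → 0 ≤ casoratian s q k := fun k hk1 hk =>
    calc 0 = casoratian s q 0 := by simp [casoratian, s, hneg (-1)]
      _ ≤ casoratian s q k := casoratian_le_of_le (by omega) hs_rec
          (fun j hj hjk => (hs_pos (j + 1) (by omega) (by omega)).le) hconv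
  refine ⟨fun m hm1 hm => ?_, ?_⟩
  · have hDm := hD m hm1 hm
    simp only [casoratian, s, Int.cast_add, Int.cast_one, sub_nonneg] at hDm
    rw [ge_iff_le, div_mul_eq_mul_div, div_le_iff₀ (hs_pos m hm1 (by omega))]
    linarith
  · exact (pos_of_casoratian_nonneg h0 hs_pos hD (N + 1) (by omega) le_rfl).ne'
      (hbig (N + 1) (by omega))

theorem no_low_degree_denominator (N : ℕ) (hN : 0 < N) (α : ℝ)
    (hα0 : 0 < α) (hα : α < Real.pi / (N + 2))
    (q : ℤ → ℝ)
    (hnonneg : ∀ k, 0 ≤ q k)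
    (h0 : 0 < q 0)
    (hneg : ∀ k : ℤ, k < 0 → q k = 0)
    (hbig : ∀ k : ℤ, (N : ℤ) < k → q k = 0)
    (hconv : ∀ k : ℤ, q k - 2 * Real.cos α * q (k - 1) + q (k - 2) ≥ 0) :
    (∀ m : ℤ, 1 ≤ m → m ≤ (N : ℤ) + 1 →
      q m ≥ (Real.sin (((m : ℝ) + 1) * α) / Real.sin ((m : ℝ) * α)) * q (m - 1))
    ∧ False :=
  no_low_degree_denominator_general N α hα0 hα q h0 hneg hbig hconv
end

section
/- Let F(x) be a rational function representable as a ratio of polynomials with nonnegative coefficients, and suppose every such representation F = P/Q has deg(Q) > 2^m. Then every subtraction-free arithmetic circuit computing F has more than m gates. -/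
/-! A subtraction-free gate at most doubles the degrees of a representation by a ratio of
polynomials with nonnegative coefficients, since `a/b + c/d = (ad + bc)/(bd)`,
`(a/b)(c/d) = ac/(bd)` and `(a/b)/(c/d) = ad/(bc)`. The inputs are such ratios of degree `≤ 1`,
so the `i`-th gate has a representation of degree `≤ 2^(i+1)`. A circuit with `h ≤ m` gates
computing `F` would thus give a representation of `F` with denominator of degree `≤ 2^m`. -/

open Polynomial

/-- An input of a subtraction-free circuit: the variable `x` or a positive scalar. -/
def SFInput (f : RatFunc ℝ) : Prop :=
  f = RatFunc.X ∨ ∃ c : ℝ, 0 < c ∧ f = RatFunc.C c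

/-- `g 0, g 1, …, g (h-1)` are the values of the gates of a subtraction-free
arithmetic circuit with `h` gates. -/
def IsSFCircuit (h : ℕ) (g : ℕ → RatFunc ℝ) : Prop :=
  ∀ i < h, ∃ a b : RatFunc ℝ,
    (SFInput a ∨ ∃ j < i, a = g j) ∧
    (SFInput b ∨ ∃ j < i, b = g j) ∧
    (g i = a + b ∨ g i = a * b ∨ g i = a / b)

/-- The circuit computes `F` if `F` is an input or the value of some gate. -/
def Computes (h : ℕ) (g : ℕ → RatFunc ℝ) (F : RatFunc ℝ) : Prop :=
  SFInput F ∨ ∃ i < h, F = g i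

namespace Polynomial

variable (R : Type*) [Semiring R] [PartialOrder R] [IsOrderedRing R]

def nonnegCoeffs : Subsemiring R[X] where
  carrier := {P | ∀ n, 0 ≤ P.coeff n}
  mul_mem' {P Q} hP hQ n := by
    rw [coeff_mul]
    exact Finset.sum_nonneg fun _ _ => mul_nonneg (hP _) (hQ _)
  one_mem' n := by
    rw [coeff_one]
    split <;> simp
  add_mem' hP hQ n := by
    rw [coeff_add]
    exact add_nonneg (hP n) (hQ n)
  zero_mem' n := by simp

variable {R}

lemma C_mem_nonnegCoeffs {c : R} (hc : 0 ≤ c) : C c ∈ nonnegCoeffs R := fun n => by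
  rw [coeff_C]
  split <;> simp [hc]

lemma X_mem_nonnegCoeffs : X ∈ nonnegCoeffs R := fun n => by
  rw [coeff_X]
  split <;> simp

end Polynomial

namespace RatFunc

variable {K : Type*} [Field K] [PartialOrder K] [IsOrderedRing K]

/-- The class `D_k` of the paper is `IsNonnegRatio (2 ^ k)`. -/
def IsNonnegRatio (d : ℕ) (f : RatFunc K) : Prop :=
  ∃ P ∈ nonnegCoeffs K, ∃ Q ∈ nonnegCoeffs K, Q ≠ 0 ∧ P.natDegree ≤ d ∧ Q.natDegree ≤ d ∧
    f = algebraMap K[X] (RatFunc K) P / algebraMap K[X] (RatFunc K) Q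

namespace IsNonnegRatio

variable {d e : ℕ} {f g : RatFunc K}

lemma mono (hde : d ≤ e) (hf : IsNonnegRatio d f) : IsNonnegRatio e f := by
  obtain ⟨P, hP, Q, hQ, hQ0, hPd, hQd, rfl⟩ := hf
  exact ⟨P, hP, Q, hQ, hQ0, hPd.trans hde, hQd.trans hde, rfl⟩

lemma X : IsNonnegRatio 1 (X : RatFunc K) :=
  ⟨_, X_mem_nonnegCoeffs, 1, one_mem _, one_ne_zero, natDegree_X_le, by simp,
    by simp [algebraMap_X]⟩

lemma C {c : K} (hc : 0 ≤ c) : IsNonnegRatio 0 (C c) :=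
  ⟨_, C_mem_nonnegCoeffs hc, 1, one_mem _, one_ne_zero, by simp, by simp,
    by simp [algebraMap_C]⟩

lemma add (hf : IsNonnegRatio d f) (hg : IsNonnegRatio e g) : IsNonnegRatio (d + e) (f + g) := by
  obtain ⟨P₁, hP₁, Q₁, hQ₁, hQ₁0, hP₁d, hQ₁d, rfl⟩ := hf
  obtain ⟨P₂, hP₂, Q₂, hQ₂, hQ₂0, hP₂d, hQ₂d, rfl⟩ := hg
  refine ⟨P₁ * Q₂ + Q₁ * P₂, add_mem (mul_mem hP₁ hQ₂) (mul_mem hQ₁ hP₂), Q₁ * Q₂,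
    mul_mem hQ₁ hQ₂, mul_ne_zero hQ₁0 hQ₂0, ?_, natDegree_mul_le_of_le hQ₁d hQ₂d, ?_⟩
  · exact natDegree_add_le_of_degree_le (natDegree_mul_le_of_le hP₁d hQ₂d)
      (natDegree_mul_le_of_le hQ₁d hP₂d)
  · rw [div_add_div _ _ (algebraMap_ne_zero hQ₁0) (algebraMap_ne_zero hQ₂0)]
    simp only [map_add, map_mul]

lemma mul (hf : IsNonnegRatio d f) (hg : IsNonnegRatio e g) : IsNonnegRatio (d + e) (f * g) := by
  obtain ⟨P₁, hP₁, Q₁, hQ₁, hQ₁0, hP₁d, hQ₁d, rfl⟩ := hf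
  obtain ⟨P₂, hP₂, Q₂, hQ₂, hQ₂0, hP₂d, hQ₂d, rfl⟩ := hg
  refine ⟨P₁ * P₂, mul_mem hP₁ hP₂, Q₁ * Q₂, mul_mem hQ₁ hQ₂, mul_ne_zero hQ₁0 hQ₂0,
    natDegree_mul_le_of_le hP₁d hP₂d, natDegree_mul_le_of_le hQ₁d hQ₂d, ?_⟩
  rw [div_mul_div_comm, map_mul, map_mul]

lemma zero : IsNonnegRatio d (0 : RatFunc K) :=
  ⟨0, zero_mem _, 1, one_mem _, one_ne_zero, by simp, by simp, by simp⟩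

lemma div (hf : IsNonnegRatio d f) (hg : IsNonnegRatio e g) : IsNonnegRatio (d + e) (f / g) := by
  obtain ⟨P₁, hP₁, Q₁, hQ₁, hQ₁0, hP₁d, hQ₁d, rfl⟩ := hf
  obtain ⟨P₂, hP₂, Q₂, hQ₂, hQ₂0, hP₂d, hQ₂d, rfl⟩ := hg
  rcases eq_or_ne P₂ 0 with rfl | hP₂0
  · -- `f / 0 = 0` in Lean
    simpa using zero
  refine ⟨P₁ * Q₂, mul_mem hP₁ hQ₂, Q₁ * P₂, mul_mem hQ₁ hP₂, mul_ne_zero hQ₁0 hP₂0,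
    natDegree_mul_le_of_le hP₁d hQ₂d, natDegree_mul_le_of_le hQ₁d hP₂d, ?_⟩
  rw [div_div_div_eq, map_mul, map_mul, mul_comm (algebraMap _ _ Q₁)]

end IsNonnegRatio

end RatFunc

open RatFunc

lemma SFInput.isNonnegRatio {f : RatFunc ℝ} (hf : SFInput f) : IsNonnegRatio 1 f := by
  rcases hf with rfl | ⟨c, hc, rfl⟩
  · exact IsNonnegRatio.X
  · exact (IsNonnegRatio.C hc.le).mono zero_le_one

lemma IsSFCircuit.isNonnegRatio_gate {h : ℕ} {g : ℕ → RatFunc ℝ} (hg : IsSFCircuit h g) :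
    ∀ i < h, IsNonnegRatio (2 ^ (i + 1)) (g i) := by
  intro i
  induction i using Nat.strong_induction_on with
  | _ i ih =>
    intro hi
    obtain ⟨a, b, ha, hb, hop⟩ := hg i hi
    have operand {a : RatFunc ℝ} (ha : SFInput a ∨ ∃ j < i, a = g j) :
        IsNonnegRatio (2 ^ i) a := by
      rcases ha with ha | ⟨j, hj, rfl⟩
      · exact ha.isNonnegRatio.mono Nat.one_le_two_pow
      · exact (ih j hj (hj.trans hi)).mono (Nat.pow_le_pow_right two_pos hj)
    rw [pow_succ, mul_two]
    rcases hop with hop | hop | hop <;> rw [hop]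
    · exact (operand ha).add (operand hb)
    · exact (operand ha).mul (operand hb)
    · exact (operand ha).div (operand hb)

lemma Computes.isNonnegRatio {h : ℕ} {g : ℕ → RatFunc ℝ} {F : RatFunc ℝ} (hg : IsSFCircuit h g)
    (hF : Computes h g F) : IsNonnegRatio (2 ^ h) F := by
  rcases hF with hF | ⟨i, hi, rfl⟩
  · exact hF.isNonnegRatio.mono Nat.one_le_two_pow
  · exact (hg.isNonnegRatio_gate i hi).mono (Nat.pow_le_pow_right two_pos hi)

theorem denominator_degree_lower_bound_implies_complexity_general (F : RatFunc ℝ) (m : ℕ)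
    (hbound : ∀ P Q : ℝ[X], (∀ n, 0 ≤ P.coeff n) → (∀ n, 0 ≤ Q.coeff n) → Q ≠ 0 →
      F = algebraMap ℝ[X] (RatFunc ℝ) P / algebraMap ℝ[X] (RatFunc ℝ) Q →
      Q.natDegree > 2 ^ m) :
    ∀ h (g : ℕ → RatFunc ℝ), IsSFCircuit h g → Computes h g F → h > m := by
  intro h g hg hF
  obtain ⟨P, hP, Q, hQ, hQ0, -, hQh, hPQ⟩ := hF.isNonnegRatio hg
  have hQm : 2 ^ m < Q.natDegree := hbound P Q hP hQ hQ0 hPQ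
  exact (Nat.pow_lt_pow_iff_right one_lt_two).mp (hQm.trans_le hQh)

theorem denominator_degree_lower_bound_implies_complexity (F : RatFunc ℝ) (m : ℕ)
    (hrep : ∃ P Q : ℝ[X], (∀ n, 0 ≤ P.coeff n) ∧ (∀ n, 0 ≤ Q.coeff n) ∧ Q ≠ 0 ∧
      F = algebraMap ℝ[X] (RatFunc ℝ) P / algebraMap ℝ[X] (RatFunc ℝ) Q)
    (hbound : ∀ P Q : ℝ[X], (∀ n, 0 ≤ P.coeff n) → (∀ n, 0 ≤ Q.coeff n) → Q ≠ 0 →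
      F = algebraMap ℝ[X] (RatFunc ℝ) P / algebraMap ℝ[X] (RatFunc ℝ) Q →
      Q.natDegree > 2 ^ m) :
    ∀ h (g : ℕ → RatFunc ℝ), IsSFCircuit h g → Computes h g F → h > m :=
  denominator_degree_lower_bound_implies_complexity_general F m hbound
end

section
/- For the polynomial f_n(x) = x² − 2(1 − 2^{−2^n})x + 1, every subtraction-free arithmetic circuit computing f_n has size greater than c·2^n for some absolute constant c > 0 (e.g., any representation f_n = P/Q with P, Q having nonnegative coefficients forces deg Q ≥ 2^{2^n}/10). -/
/-!
Every gate of a subtraction-free circuit with `h` gates is a quotient `P / Q` of polynomials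
with nonnegative coefficients and degrees at most `2 ^ h`, since `+`, `×` and `÷` at most add
degrees. If `fₙ = P / Q`, then `P = fₙ Q` vanishes at `e^{iα}` with `α = α(n)`, so
`∑ pₖ cos (k α) = 0`; as the `pₖ` are nonnegative, some `cos (k α)` with `k ≤ deg P` is not
positive, whence `deg P · α ≥ π / 2`. Since `2 ^ (-2 ^ n) = 1 - cos α ≥ 2 α² / π²`, this forces
`2 ^ 2 ^ n ≤ 2 (deg P)² ≤ 2 ^ (2 h + 1)`, i.e. `2 ^ n ≤ 2 h + 1`.
-/

open Polynomial

/-- The polynomial `f_n(x) = x² − 2(1 − 2^{−2ⁿ})x + 1`, viewed as a rational function. -/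
noncomputable def fPoly (n : ℕ) : RatFunc ℝ :=
  RatFunc.X ^ 2 - RatFunc.C (2 * (1 - (2 : ℝ) ^ (-(2 ^ n : ℤ)))) * RatFunc.X + 1

open Real

lemma Polynomial.coeff_mul_nonneg {R : Type*} [Semiring R] [PartialOrder R] [IsOrderedRing R]
    {p q : R[X]} (hp : ∀ k, 0 ≤ p.coeff k) (hq : ∀ k, 0 ≤ q.coeff k) (k : ℕ) :
    0 ≤ (p * q).coeff k := by
  rw [coeff_mul]
  exact Finset.sum_nonneg fun x _ => mul_nonneg (hp x.1) (hq x.2)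

section NonnegRepr

variable {K : Type*} [Field K] [LinearOrder K]

def HasNonnegRepr (F : RatFunc K) (D : ℕ) : Prop :=
  ∃ P Q : K[X], (∀ k, 0 ≤ P.coeff k) ∧ (∀ k, 0 ≤ Q.coeff k) ∧ Q ≠ 0 ∧
    P.natDegree ≤ D ∧ Q.natDegree ≤ D ∧
    F = algebraMap K[X] (RatFunc K) P / algebraMap K[X] (RatFunc K) Q

namespace HasNonnegRepr

lemma mono {F : RatFunc K} {D D' : ℕ} (h : HasNonnegRepr F D) (hD : D ≤ D') :
    HasNonnegRepr F D' := by
  obtain ⟨P, Q, hP, hQ, hQ0, hPD, hQD, rfl⟩ := h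
  exact ⟨P, Q, hP, hQ, hQ0, hPD.trans hD, hQD.trans hD, rfl⟩

variable [IsStrictOrderedRing K] {F G : RatFunc K} {D₁ D₂ : ℕ}

lemma of_coeff_nonneg {P : K[X]} {D : ℕ} (hP : ∀ k, 0 ≤ P.coeff k) (hPD : P.natDegree ≤ D) :
    HasNonnegRepr (algebraMap K[X] (RatFunc K) P) D := by
  refine ⟨P, 1, hP, fun k => ?_, one_ne_zero, hPD, by simp, by simp⟩
  rw [coeff_one]
  split_ifs <;> simp

lemma add (hF : HasNonnegRepr F D₁) (hG : HasNonnegRepr G D₂) :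
    HasNonnegRepr (F + G) (D₁ + D₂) := by
  obtain ⟨P₁, Q₁, hP₁, hQ₁, hQ₁0, hP₁D, hQ₁D, rfl⟩ := hF
  obtain ⟨P₂, Q₂, hP₂, hQ₂, hQ₂0, hP₂D, hQ₂D, rfl⟩ := hG
  refine ⟨P₁ * Q₂ + Q₁ * P₂, Q₁ * Q₂, fun k => ?_, coeff_mul_nonneg hQ₁ hQ₂,
    mul_ne_zero hQ₁0 hQ₂0, ?_, natDegree_mul_le.trans (add_le_add hQ₁D hQ₂D), ?_⟩
  · rw [coeff_add]
    exact add_nonneg (coeff_mul_nonneg hP₁ hQ₂ k) (coeff_mul_nonneg hQ₁ hP₂ k)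
  · exact (natDegree_add_le _ _).trans (max_le
      (natDegree_mul_le.trans (add_le_add hP₁D hQ₂D))
      (natDegree_mul_le.trans (add_le_add hQ₁D hP₂D)))
  · rw [div_add_div _ _ (RatFunc.algebraMap_ne_zero hQ₁0) (RatFunc.algebraMap_ne_zero hQ₂0)]
    simp only [map_add, map_mul]

lemma mul (hF : HasNonnegRepr F D₁) (hG : HasNonnegRepr G D₂) :
    HasNonnegRepr (F * G) (D₁ + D₂) := by
  obtain ⟨P₁, Q₁, hP₁, hQ₁, hQ₁0, hP₁D, hQ₁D, rfl⟩ := hF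
  obtain ⟨P₂, Q₂, hP₂, hQ₂, hQ₂0, hP₂D, hQ₂D, rfl⟩ := hG
  refine ⟨P₁ * P₂, Q₁ * Q₂, coeff_mul_nonneg hP₁ hP₂, coeff_mul_nonneg hQ₁ hQ₂,
    mul_ne_zero hQ₁0 hQ₂0, natDegree_mul_le.trans (add_le_add hP₁D hP₂D),
    natDegree_mul_le.trans (add_le_add hQ₁D hQ₂D), ?_⟩
  rw [div_mul_div_comm, map_mul, map_mul]

lemma div (hF : HasNonnegRepr F D₁) (hG : HasNonnegRepr G D₂) :
    HasNonnegRepr (F / G) (D₁ + D₂) := by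
  obtain ⟨P₁, Q₁, hP₁, hQ₁, hQ₁0, hP₁D, hQ₁D, rfl⟩ := hF
  obtain ⟨P₂, Q₂, hP₂, hQ₂, hQ₂0, hP₂D, hQ₂D, rfl⟩ := hG
  by_cases hP₂0 : P₂ = 0
  -- `F / 0 = 0` in `RatFunc`
  · subst hP₂0
    simpa using
      of_coeff_nonneg (D := D₁ + D₂) (P := (0 : K[X])) (fun k => (coeff_zero k).ge) (by simp)
  · refine ⟨P₁ * Q₂, Q₁ * P₂, coeff_mul_nonneg hP₁ hQ₂, coeff_mul_nonneg hQ₁ hP₂,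
      mul_ne_zero hQ₁0 hP₂0, natDegree_mul_le.trans (add_le_add hP₁D hQ₂D),
      natDegree_mul_le.trans (add_le_add hQ₁D hP₂D), ?_⟩
    rw [div_div_div_eq, map_mul, map_mul, mul_comm (algebraMap _ _ Q₁)]

end HasNonnegRepr

end NonnegRepr

lemma SFInput.hasNonnegRepr {F : RatFunc ℝ} (h : SFInput F) : HasNonnegRepr F 1 := by
  rcases h with rfl | ⟨c, hc, rfl⟩
  · rw [← RatFunc.algebraMap_X]
    refine HasNonnegRepr.of_coeff_nonneg (fun k => ?_) natDegree_X_le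
    rw [coeff_X]
    split_ifs <;> simp
  · rw [← RatFunc.algebraMap_C]
    refine HasNonnegRepr.of_coeff_nonneg (fun k => ?_) (by simp)
    rw [coeff_C]
    split_ifs <;> simp [hc.le]

lemma IsSFCircuit.hasNonnegRepr_gate {h : ℕ} {g : ℕ → RatFunc ℝ} (hg : IsSFCircuit h g) :
    ∀ i < h, HasNonnegRepr (g i) (2 ^ (i + 1)) := by
  intro i
  induction i using Nat.strong_induction_on with
  | _ i ih =>
    intro hi
    have operand : ∀ a, (SFInput a ∨ ∃ j < i, a = g j) → HasNonnegRepr a (2 ^ i) := by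
      rintro a (ha | ⟨j, hj, rfl⟩)
      · exact ha.hasNonnegRepr.mono Nat.one_le_two_pow
      · exact (ih j hj (hj.trans hi)).mono (Nat.pow_le_pow_right two_pos hj)
    obtain ⟨a, b, ha, hb, hab⟩ := hg i hi
    have hA := operand a ha
    have hB := operand b hb
    rw [pow_succ, mul_two]
    rcases hab with hab | hab | hab <;> rw [hab]
    exacts [hA.add hB, hA.mul hB, hA.div hB]

lemma IsSFCircuit.hasNonnegRepr {h : ℕ} {g : ℕ → RatFunc ℝ} {F : RatFunc ℝ}
    (hg : IsSFCircuit h g) (hF : Computes h g F) : HasNonnegRepr F (2 ^ h) := by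
  rcases hF with hF | ⟨i, hi, rfl⟩
  · exact hF.hasNonnegRepr.mono Nat.one_le_two_pow
  · exact (hg.hasNonnegRepr_gate i hi).mono (Nat.pow_le_pow_right two_pos hi)

noncomputable def cosQuadratic (θ : ℝ) : ℝ[X] := X ^ 2 - C (2 * cos θ) * X + 1

lemma aeval_exp_mul_I_cosQuadratic (θ : ℝ) :
    aeval (Complex.exp (θ * Complex.I)) (cosQuadratic θ) = 0 := by
  have hcos := Complex.two_cos θ
  have hinv : Complex.exp (-θ * Complex.I) * Complex.exp (θ * Complex.I) = 1 := by
    rw [← Complex.exp_add]; ring_nf; exact Complex.exp_zero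
  simp only [cosQuadratic, map_add, map_sub, map_mul, map_pow, aeval_X, aeval_C, map_one,
    Complex.coe_algebraMap]
  push_cast
  linear_combination (-Complex.exp (θ * Complex.I)) * hcos - hinv

lemma natDegree_cosQuadratic (θ : ℝ) : (cosQuadratic θ).natDegree = 2 := by
  unfold cosQuadratic; compute_degree!

lemma re_aeval_exp_mul_I (P : ℝ[X]) (θ : ℝ) :
    (aeval (Complex.exp (θ * Complex.I)) P).re =
      ∑ k ∈ Finset.range (P.natDegree + 1), P.coeff k * cos (k * θ) := by
  rw [aeval_eq_sum_range, Complex.re_sum]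
  refine Finset.sum_congr rfl fun k _ => ?_
  rw [Complex.smul_re, ← Complex.exp_nat_mul, ← mul_assoc, smul_eq_mul]
  exact_mod_cast congrArg (P.coeff k * ·) (Complex.exp_ofReal_mul_I_re (k * θ))

lemma pi_div_two_le_natDegree_mul_of_aeval_exp_eq_zero {P : ℝ[X]} (hP : ∀ k, 0 ≤ P.coeff k)
    (hP0 : P ≠ 0) {θ : ℝ} (hθ : 0 ≤ θ) (hroot : aeval (Complex.exp (θ * Complex.I)) P = 0) :
    π / 2 ≤ P.natDegree * θ := by
  by_contra! hlt
  have hcos_pos : ∀ k ∈ Finset.range (P.natDegree + 1), 0 < cos (k * θ) := by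
    intro k hk
    have hk : (k : ℝ) ≤ P.natDegree := by
      exact_mod_cast Nat.lt_succ_iff.1 (Finset.mem_range.1 hk)
    apply cos_pos_of_mem_Ioo
    constructor <;> nlinarith [pi_pos]
  have hsum_pos : 0 < ∑ k ∈ Finset.range (P.natDegree + 1), P.coeff k * cos (k * θ) := by
    refine Finset.sum_pos' (fun k hk => mul_nonneg (hP k) (hcos_pos k hk).le) ⟨P.natDegree,
      Finset.self_mem_range_succ _, mul_pos ?_ (hcos_pos _ (Finset.self_mem_range_succ _))⟩
    exact (hP _).lt_of_ne' (leadingCoeff_ne_zero.2 hP0)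
  rw [← re_aeval_exp_mul_I, hroot, Complex.zero_re] at hsum_pos
  exact hsum_pos.false

lemma one_le_two_mul_natDegree_sq_mul_one_sub_cos {P : ℝ[X]} (hP : ∀ k, 0 ≤ P.coeff k)
    (hP0 : P ≠ 0) {θ : ℝ} (hθ₀ : 0 ≤ θ) (hθπ : θ ≤ π)
    (hroot : aeval (Complex.exp (θ * Complex.I)) P = 0) :
    1 ≤ 2 * P.natDegree ^ 2 * (1 - cos θ) := by
  have hangle := pi_div_two_le_natDegree_mul_of_aeval_exp_eq_zero hP hP0 hθ₀ hroot
  have hcos := cos_le_one_sub_mul_cos_sq (abs_le.2 ⟨by linarith [pi_pos], hθπ⟩)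
  have hone : 1 ≤ 2 * P.natDegree * θ / π := by
    rw [le_div_iff₀ pi_pos]; linarith
  calc (1 : ℝ) ≤ (2 * P.natDegree * θ / π) ^ 2 := one_le_pow₀ hone
    _ = 2 * P.natDegree ^ 2 * (2 / π ^ 2 * θ ^ 2) := by field_simp
    _ ≤ 2 * P.natDegree ^ 2 * (1 - cos θ) := by gcongr; linarith

lemma HasNonnegRepr.cosQuadratic_bound {θ : ℝ} {D : ℕ} (hθ₀ : 0 ≤ θ) (hθπ : θ ≤ π)
    (h : HasNonnegRepr (algebraMap ℝ[X] (RatFunc ℝ) (cosQuadratic θ)) D) :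
    2 ≤ D ∧ 1 ≤ 2 * (D : ℝ) ^ 2 * (1 - cos θ) := by
  obtain ⟨P, Q, hP, -, hQ0, hPD, -, hPQ⟩ := h
  have hP_eq : P = cosQuadratic θ * Q := by
    apply RatFunc.algebraMap_injective ℝ
    rw [map_mul, hPQ, div_mul_cancel₀ _ (RatFunc.algebraMap_ne_zero hQ0)]
  have hq0 : cosQuadratic θ ≠ 0 := ne_zero_of_natDegree_gt (natDegree_cosQuadratic θ).symm.le
  have hP0 : P ≠ 0 := hP_eq ▸ mul_ne_zero hq0 hQ0
  have hdeg : P.natDegree = 2 + Q.natDegree := by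
    rw [hP_eq, natDegree_mul hq0 hQ0, natDegree_cosQuadratic]
  have hroot : aeval (Complex.exp (θ * Complex.I)) P = 0 := by
    rw [hP_eq, map_mul, aeval_exp_mul_I_cosQuadratic, zero_mul]
  refine ⟨by omega, ?_⟩
  calc (1 : ℝ) ≤ 2 * P.natDegree ^ 2 * (1 - cos θ) :=
        one_le_two_mul_natDegree_sq_mul_one_sub_cos hP hP0 hθ₀ hθπ hroot
    _ ≤ 2 * (D : ℝ) ^ 2 * (1 - cos θ) := by
        gcongr
        exact sub_nonneg.2 (cos_le_one θ)

noncomputable def fPolyAngle (n : ℕ) : ℝ := arccos (1 - ((2 : ℝ) ^ 2 ^ n)⁻¹)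

lemma cos_fPolyAngle (n : ℕ) : cos (fPolyAngle n) = 1 - ((2 : ℝ) ^ 2 ^ n)⁻¹ := by
  have hε₀ : 0 < ((2 : ℝ) ^ 2 ^ n)⁻¹ := by positivity
  have hε₁ : ((2 : ℝ) ^ 2 ^ n)⁻¹ ≤ 1 := inv_le_one_of_one_le₀ (one_le_pow₀ one_le_two)
  exact cos_arccos (by linarith) (by linarith)

lemma fPoly_eq_cosQuadratic (n : ℕ) :
    fPoly n = algebraMap ℝ[X] (RatFunc ℝ) (cosQuadratic (fPolyAngle n)) := by
  have hε : (2 : ℝ) ^ (-(2 ^ n : ℤ)) = (2 ^ 2 ^ n)⁻¹ := by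
    rw [zpow_neg]
    norm_cast
  simp only [fPoly, cosQuadratic, cos_fPolyAngle, hε, map_add, map_sub, map_mul, map_pow,
    map_one, RatFunc.algebraMap_X, RatFunc.algebraMap_C]

lemma HasNonnegRepr.fPoly_bound {n D : ℕ} (h : HasNonnegRepr (fPoly n) D) :
    2 ≤ D ∧ 2 ^ 2 ^ n ≤ 2 * D ^ 2 := by
  rw [fPoly_eq_cosQuadratic] at h
  obtain ⟨hD, hbound⟩ :=
    h.cosQuadratic_bound (θ := fPolyAngle n) (arccos_nonneg _) (arccos_le_pi _)
  rw [cos_fPolyAngle, sub_sub_cancel, ← div_eq_mul_inv, one_le_div (by positivity)] at hbound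
  exact ⟨hD, by exact_mod_cast hbound⟩

theorem sf_complexity_exponential_lower_bound :
    ∃ c : ℝ, 0 < c ∧
      ∀ (n h : ℕ) (g : ℕ → RatFunc ℝ),
        IsSFCircuit h g → Computes h g (fPoly n) → (h : ℝ) > c * 2 ^ n := by
  refine ⟨1 / 4, by norm_num, fun n h g hg hF => ?_⟩
  obtain ⟨hdeg_two, hdeg⟩ := (hg.hasNonnegRepr hF).fPoly_bound
  have hh : 1 ≤ h := Nat.pos_of_ne_zero (Nat.one_lt_two_pow_iff.1 hdeg_two)
  rw [← pow_mul, ← pow_succ', Nat.pow_le_pow_iff_right one_lt_two] at hdeg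
  have hdegℝ : (2 : ℝ) ^ n ≤ h * 2 + 1 := by exact_mod_cast hdeg
  have hhℝ : (1 : ℝ) ≤ h := by exact_mod_cast hh
  linarith
end

section
/- For distinct variables x₁, …, x_k, variables y₁, y₂, …, and an integer ℓ ≥ 1, the determinant of the k×k matrix with (i,j) entry ∏_{b<i}(x_j + y_b) / ∏_{a<j}(x_j − x_a), where i ranges over {ℓ, …, ℓ+k−1} and j over {1,…,k}, equals ∏_{1≤j≤k} ∏_{1≤b<ℓ} (x_j + y_b). -/
/-!
Factor `∏_{b<ℓ-1} (x_j + y_b)` out of column `j`: what remains in row `i` is the monic polynomial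
`∏_{b<i} (X + y_{ℓ-1+b})` of degree `i` evaluated at `x_j`, so by row reduction against lower
powers the remaining determinant is the Vandermonde determinant `∏_{a<j} (x_j - x_a)`, which the
denominators cancel exactly.
-/

open Finset Polynomial Matrix

lemma monic_prod_range_X_add_C {R : Type*} [CommRing R] (z : ℕ → R) (n : ℕ) :
    (∏ b ∈ range n, (X + C (z b))).Monic :=
  monic_prod_of_monic _ _ fun b _ => monic_X_add_C (z b)

section

variable {R : Type*} [CommRing R] [Nontrivial R]

lemma natDegree_prod_range_X_add_C (z : ℕ → R) (n : ℕ) :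
    (∏ b ∈ range n, (X + C (z b))).natDegree = n := by
  rw [natDegree_prod_of_monic _ _ fun b _ => monic_X_add_C (z b)]
  simp only [natDegree_X_add_C, sum_const, card_range, smul_eq_mul, mul_one]

lemma det_prod_range_add_eq_mul_det_vandermonde {k : ℕ} (x : Fin k → R) (y : ℕ → R) (m : ℕ) :
    det (of fun i j : Fin k => ∏ b ∈ range (m + i), (x j + y b)) =
      (∏ j, ∏ b ∈ range m, (x j + y b)) * det (vandermonde x) := by
  set p : Fin k → R[X] := fun i => ∏ b ∈ range i, (X + C (y (m + b)))
  have hsplit : (of fun i j : Fin k => ∏ b ∈ range (m + i), (x j + y b)) =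
      of fun i j => (∏ b ∈ range m, (x j + y b)) * (of fun i j => (p i).eval (x j)) i j := by
    ext i j
    simp [p, prod_range_add, eval_prod]
  rw [hsplit, det_mul_row, det_eval_matrixOfPolynomials_eq_det_vandermonde x p
    (fun i => natDegree_prod_range_X_add_C _ i) (fun i => monic_prod_range_X_add_C _ i),
    ← det_transpose]
  rfl

end

lemma Matrix.det_vandermonde_eq_prod_prod_Iio {R : Type*} [CommRing R] {k : ℕ} (x : Fin k → R) :
    det (vandermonde x) = ∏ j, ∏ a ∈ Iio j, (x j - x a) := by
  rw [det_vandermonde]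
  exact prod_comm' fun i j => by simp only [mem_univ, mem_Ioi, mem_Iio, true_and, and_true]

theorem interval_flag_minor_double_general (k : ℕ) (x : Fin k → ℝ) (y : ℕ → ℝ)
    (hx : Function.Injective x) (ℓ : ℕ) :
    Matrix.det (fun i j : Fin k =>
        (∏ b ∈ Finset.range (ℓ - 1 + (i : ℕ)), (x j + y b)) /
          ∏ a ∈ Finset.Iio j, (x j - x a))
      = ∏ j, ∏ b ∈ Finset.range (ℓ - 1), (x j + y b) := by
  have hV : det (vandermonde x) ≠ 0 := det_vandermonde_ne_zero_iff.mpr hx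
  calc _ = det (of fun i j : Fin k => (∏ a ∈ Iio j, (x j - x a))⁻¹ *
          (of fun i j : Fin k => ∏ b ∈ range (ℓ - 1 + i), (x j + y b)) i j) := by
        simp only [div_eq_inv_mul]; rfl
    _ = (det (vandermonde x))⁻¹ * ((∏ j, ∏ b ∈ range (ℓ - 1), (x j + y b)) *
          det (vandermonde x)) := by
        rw [det_mul_row, det_prod_range_add_eq_mul_det_vandermonde, prod_inv_distrib,
          det_vandermonde_eq_prod_prod_Iio]
    _ = _ := by field_simp

theorem interval_flag_minor_double (k : ℕ) (x : Fin k → ℝ) (y : ℕ → ℝ)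
    (hx : Function.Injective x) (ℓ : ℕ) (hℓ : 1 ≤ ℓ) :
    Matrix.det (fun i j : Fin k =>
        (∏ b ∈ Finset.range (ℓ - 1 + (i : ℕ)), (x j + y b)) /
          ∏ a ∈ Finset.Iio j, (x j - x a))
      = ∏ j, ∏ b ∈ Finset.range (ℓ - 1), (x j + y b) :=
  interval_flag_minor_double_general k x y hx ℓ
end

section
/- (Cayley–Prüfer) Let W be a finite set with a distinguished root r, and let (z_v)_{v∈W} be positive reals. In the complete directed graph on W, assign to each edge a→b the weight z_b/(Σ_{v∈W} z_v). Then the sum over all directed spanning trees rooted at r of the product of edge weights equals z_r/(Σ_{v∈W} z_v). Equivalently, Σ_{T rooted at r} ∏_{(a→b)∈T} z_b = z_r·(Σ_{v∈W} z_v)^{|W|−2}. -/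
/-!
Generalise from trees to forests: for disjoint `A` and `D`, weigh each forest on `A ∪ D` whose
roots are exactly `A` by `∏_{v ∈ D} z (parent v)`; for `D ≠ ∅` the total weight is
`z(A) (z(A) + z(D))^(|D| - 1)`. Induct on `|A| + |D|`: fix a root `a` and classify forests by the
set `C ⊆ D` of children of `a`. Detaching `C` from `a` is a bijection onto the forests on `D \ C`
with roots `(A \ {a}) ∪ C`, and it divides the weight by `z(a)^|C|`. The sum over `C` is then
evaluated by the binomial theorem together with
`∑_{C ⊆ D} x^|C| z(C) y^|D \ C| = x z(D) (x + y)^(|D| - 1)`.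
Trees rooted at `r` are the forests with `A = {r}`.
-/

open scoped Classical

/-- `p` is the parent function of a directed spanning tree rooted at `r`:
`r` is fixed and every vertex eventually reaches `r` by iterating `p`.
The edges of the tree are `v → p v` for `v ≠ r`. -/
def IsRootedTree {W : Type} (r : W) (p : W → W) : Prop :=
  p r = r ∧ ∀ v, ∃ n : ℕ, p^[n] v = r

open Finset

section Algebra

variable {ι R : Type*} [DecidableEq ι] [CommSemiring R]

theorem Finset.sum_powerset_filter_mem_pow_mul_pow (x y : R) {D : Finset ι} {c : ι}
    (hc : c ∈ D) :
    ∑ C ∈ D.powerset with c ∈ C, x ^ #C * y ^ (#D - #C) = x * (x + y) ^ (#D - 1) := by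
  obtain ⟨D, hcD, rfl⟩ : ∃ D', c ∉ D' ∧ D = insert c D' :=
    ⟨D.erase c, notMem_erase c D, (insert_erase hc).symm⟩
  have hc' : ∀ C ∈ D.powerset, c ∉ C := fun C hC h => hcD (mem_powerset.1 hC h)
  rw [sum_filter, sum_powerset_insert hcD, card_insert_of_notMem hcD, Nat.add_sub_cancel,
    ← sum_pow_mul_eq_add_pow, mul_sum]
  rw [sum_congr rfl fun C hC => if_neg (hc' C hC), sum_const_zero, zero_add]
  refine sum_congr rfl fun C hC => ?_
  rw [if_pos (mem_insert_self c C), card_insert_of_notMem (hc' C hC), Nat.add_sub_add_right,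
    pow_succ']
  ring

theorem Finset.sum_powerset_pow_mul_sum_mul_pow (x y : R) (z : ι → R) (D : Finset ι) :
    ∑ C ∈ D.powerset, x ^ #C * (∑ c ∈ C, z c) * y ^ (#D - #C)
      = x * (∑ c ∈ D, z c) * (x + y) ^ (#D - 1) := by
  simp_rw [mul_sum, sum_mul]
  rw [sum_comm' (t' := D) (s' := fun c => D.powerset.filter (c ∈ ·))]
  · refine sum_congr rfl fun c hc => ?_
    rw [mul_right_comm, ← sum_powerset_filter_mem_pow_mul_pow x y hc, sum_mul]
    exact sum_congr rfl fun C _ => by ring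
  · intro C c
    simp only [mem_powerset, mem_filter]
    exact ⟨fun ⟨h, hc⟩ => ⟨⟨h, hc⟩, h hc⟩, fun ⟨⟨h, hc⟩, _⟩ => ⟨h, hc⟩⟩

end Algebra

section Forest

variable {W : Type*}

def IsRootedForest (A D : Finset W) (p : W → W) : Prop :=
  (∀ v ∉ D, p v = v) ∧ ∀ v ∈ D, ∃ n : ℕ, p^[n] v ∈ A

theorem exists_iterate_mem_of_eq_of_notMem {p q : W → W} {T : Finset W}
    (hpq : ∀ w ∉ T, q w = p w) {v : W} {n : ℕ} (hn : p^[n] v ∈ T) :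
    ∃ m, q^[m] v ∈ T := by
  induction n generalizing v with
  | zero => exact ⟨0, hn⟩
  | succ n ih =>
    by_cases hv : v ∈ T
    · exact ⟨0, hv⟩
    obtain ⟨m, hm⟩ := ih (by rwa [Function.iterate_succ_apply] at hn)
    exact ⟨m + 1, by rwa [Function.iterate_succ_apply, hpq v hv]⟩

namespace IsRootedForest

variable {A D C : Finset W} {p q : W → W} {a : W}

theorem empty_right_iff : IsRootedForest A ∅ p ↔ p = id :=
  ⟨fun hp => funext fun v => hp.1 v (notMem_empty v),
    fun hp => ⟨fun v _ => hp ▸ rfl, by simp⟩⟩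

theorem not_empty_left (hD : D.Nonempty) : ¬ IsRootedForest ∅ D p := fun hp => by
  obtain ⟨v, hv⟩ := hD
  obtain ⟨n, hn⟩ := hp.2 v hv
  exact notMem_empty _ hn

variable [DecidableEq W]

theorem apply_mem (hp : IsRootedForest A D p) (hAD : Disjoint A D) {v : W} (hv : v ∈ D) :
    p v ∈ A ∪ D := by
  by_contra h
  have hfix : p (p v) = p v := hp.1 _ fun h' => h (mem_union_right _ h')
  obtain ⟨n, hn⟩ := hp.2 v hv
  cases n with
  | zero => exact disjoint_left.1 hAD hn hv
  | succ n =>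
    rw [Function.iterate_succ_apply, Function.iterate_fixed hfix] at hn
    exact h (mem_union_left _ hn)

theorem piecewise_id (hp : IsRootedForest A D p) (hAD : Disjoint A D) (ha : a ∈ A)
    (hC : C = D.filter (p · = a)) :
    IsRootedForest (A.erase a ∪ C) (D \ C) (C.piecewise id p) := by
  have hreach : ∀ n w, w ≠ a → p^[n] w ∈ A → ∃ m, p^[m] w ∈ A.erase a ∪ C := by
    intro n
    induction n with
    | zero => exact fun w hw hn => ⟨0, mem_union_left _ (mem_erase.2 ⟨hw, hn⟩)⟩
    | succ n ih =>
      intro w hw hn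
      by_cases hpw : p w = a
      · have hwD : w ∈ D := by_contra fun h => hw (hp.1 w h ▸ hpw)
        exact ⟨0, mem_union_right _ (hC ▸ mem_filter.2 ⟨hwD, hpw⟩)⟩
      obtain ⟨m, hm⟩ := ih (p w) hpw (by rwa [Function.iterate_succ_apply] at hn)
      exact ⟨m + 1, by rwa [Function.iterate_succ_apply]⟩
  refine ⟨fun v hv => ?_, fun v hv => ?_⟩
  · by_cases hvC : v ∈ C
    · exact C.piecewise_eq_of_mem _ _ hvC
    · rw [C.piecewise_eq_of_notMem _ _ hvC]
      exact hp.1 v fun hvD => hv (mem_sdiff.2 ⟨hvD, hvC⟩)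
  · obtain ⟨hvD, hvC⟩ := mem_sdiff.1 hv
    obtain ⟨n, hn⟩ := hp.2 v hvD
    obtain ⟨m, hm⟩ := hreach n v (fun h => disjoint_left.1 hAD (h ▸ ha) hvD) hn
    exact exists_iterate_mem_of_eq_of_notMem (p := p)
      (fun w hw => C.piecewise_eq_of_notMem _ _ fun h => hw (mem_union_right _ h)) hm

theorem piecewise_const (hq : IsRootedForest (A.erase a ∪ C) (D \ C) q) (hAD : Disjoint A D)
    (ha : a ∈ A) (hCD : C ⊆ D) :
    IsRootedForest A D (C.piecewise (fun _ => a) q) ∧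
      D.filter (C.piecewise (fun _ => a) q · = a) = C := by
  have haD : a ∉ D := disjoint_left.1 hAD ha
  have haC : a ∉ C := fun h => haD (hCD h)
  have hroots : Disjoint (A.erase a ∪ C) (D \ C) :=
    disjoint_union_left.2 ⟨hAD.mono (erase_subset a A) sdiff_subset, disjoint_sdiff⟩
  refine ⟨⟨fun v hv => ?_, fun v hv => ?_⟩, ?_⟩
  · have hvC : v ∉ C := fun h => hv (hCD h)
    rw [C.piecewise_eq_of_notMem _ _ hvC]
    exact hq.1 v fun h => hv (mem_sdiff.1 h).1
  · obtain ⟨n, hn⟩ : ∃ n, q^[n] v ∈ A.erase a ∪ C := by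
      by_cases hvC : v ∈ C
      · exact ⟨0, mem_union_right _ hvC⟩
      · exact hq.2 v (mem_sdiff.2 ⟨hv, hvC⟩)
    obtain ⟨m, hm⟩ := exists_iterate_mem_of_eq_of_notMem (p := q)
      (q := C.piecewise (fun _ => a) q)
      (fun w hw => C.piecewise_eq_of_notMem _ _ fun h => hw (mem_union_right _ h)) hn
    rcases mem_union.1 hm with h | h
    · exact ⟨m, mem_of_mem_erase h⟩
    · exact ⟨m + 1, by rwa [Function.iterate_succ_apply', C.piecewise_eq_of_mem _ _ h]⟩
  · ext v
    rw [mem_filter]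
    by_cases hvC : v ∈ C
    · simp [hvC, hCD hvC]
    · rw [C.piecewise_eq_of_notMem _ _ hvC, iff_false_intro hvC, iff_false, not_and]
      intro hvD hqv
      have := hq.apply_mem hroots (mem_sdiff.2 ⟨hvD, hvC⟩)
      simp [hqv, haD, haC] at this

end IsRootedForest

end Forest

section Weight

variable {W R : Type*} [Fintype W] [DecidableEq W] [CommSemiring R]

noncomputable def forestWeight (z : W → R) (A D : Finset W) : R :=
  ∑ p : W → W, if IsRootedForest A D p then ∏ v ∈ D, z (p v) else 0

theorem forestWeight_empty_right (z : W → R) (A : Finset W) : forestWeight z A ∅ = 1 := by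
  simp [forestWeight, IsRootedForest.empty_right_iff]

theorem forestWeight_empty_left (z : W → R) {D : Finset W} (hD : D.Nonempty) :
    forestWeight z ∅ D = 0 := by
  simp [forestWeight, IsRootedForest.not_empty_left hD]

theorem forestWeight_eq_sum_powerset (z : W → R) {A D : Finset W} (hAD : Disjoint A D) {a : W}
    (ha : a ∈ A) :
    forestWeight z A D
      = ∑ C ∈ D.powerset, z a ^ #C * forestWeight z (A.erase a ∪ C) (D \ C) := by
  simp only [forestWeight, ← sum_filter, mul_sum]
  rw [← sum_fiberwise_of_maps_to (g := fun p => D.filter (p · = a)) (t := D.powerset)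
    fun p _ => mem_powerset.2 (filter_subset _ _)]
  refine sum_congr rfl fun C hC => ?_
  have hCD := mem_powerset.1 hC
  rw [filter_filter]
  refine sum_nbij' (fun p => C.piecewise id p) (fun q => C.piecewise (fun _ => a) q)
    ?_ ?_ ?_ ?_ ?_
  · intro p hp
    simp only [mem_filter, mem_univ, true_and] at hp ⊢
    exact hp.1.piecewise_id hAD ha hp.2.symm
  · intro q hq
    simp only [mem_filter, mem_univ, true_and] at hq ⊢
    exact hq.piecewise_const hAD ha hCD
  · intro p hp
    simp only [mem_filter, mem_univ, true_and] at hp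
    funext v
    by_cases hvC : v ∈ C
    · rw [C.piecewise_eq_of_mem _ _ hvC]
      exact ((mem_filter.1 (hp.2 ▸ hvC)).2).symm
    · simp [hvC]
  · intro q hq
    simp only [mem_filter, mem_univ, true_and] at hq
    funext v
    by_cases hvC : v ∈ C
    · rw [C.piecewise_eq_of_mem _ _ hvC]
      exact (hq.1 v fun h => (mem_sdiff.1 h).2 hvC).symm
    · simp [hvC]
  · intro p hp
    simp only [mem_filter, mem_univ, true_and] at hp
    rw [← prod_sdiff hCD, mul_comm]
    congr 1
    · rw [← prod_const]
      refine prod_congr rfl fun v hv => ?_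
      rw [← hp.2, mem_filter] at hv
      rw [hv.2]
    · exact prod_congr rfl fun v hv => by rw [C.piecewise_eq_of_notMem _ _ (mem_sdiff.1 hv).2]

end Weight

theorem add_mul_forestWeight {W K : Type*} [Fintype W] [DecidableEq W] [Field K]
    [LinearOrder K] [IsStrictOrderedRing K] {z : W → K} (hz : ∀ v, 0 < z v) {A D : Finset W}
    (hAD : Disjoint A D) :
    (∑ v ∈ A, z v + ∑ v ∈ D, z v) * forestWeight z A D
      = (∑ v ∈ A, z v) * (∑ v ∈ A, z v + ∑ v ∈ D, z v) ^ #D := by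
  induction hn : #A + #D using Nat.strong_induction_on generalizing A D with
  | _ n ih =>
  rcases D.eq_empty_or_nonempty with rfl | hD
  · simp [forestWeight_empty_right]
  rcases A.eq_empty_or_nonempty with rfl | ⟨a, ha⟩
  · simp [forestWeight_empty_left z hD]
  set α := ∑ v ∈ A.erase a, z v
  set β := ∑ v ∈ D, z v
  have hα : 0 ≤ α := sum_nonneg fun v _ => (hz v).le
  have hβ : 0 < β := sum_pos (fun v _ => hz v) hD
  obtain ⟨k, hk⟩ : ∃ k, #D = k + 1 := ⟨#D - 1, (Nat.sub_add_cancel (card_pos.2 hD)).symm⟩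
  have hsmaller : ∀ C ∈ D.powerset, (α + β) * forestWeight z (A.erase a ∪ C) (D \ C)
      = (α + ∑ c ∈ C, z c) * (α + β) ^ (#D - #C) := by
    intro C hC
    have hCD := mem_powerset.1 hC
    have hdisj : Disjoint (A.erase a) C := (hAD.mono_left (erase_subset a A)).mono_right hCD
    have hsum : ∑ v ∈ A.erase a ∪ C, z v + ∑ v ∈ D \ C, z v = α + β := by
      rw [sum_union hdisj, add_assoc, add_comm (∑ v ∈ C, z v), sum_sdiff hCD]
    rw [← hsum, ih _ ?_ (disjoint_union_left.2 ⟨hAD.mono (erase_subset a A) sdiff_subset,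
      disjoint_sdiff⟩) rfl, sum_union hdisj, card_sdiff_of_subset hCD]
    rw [← hn, card_union_of_disjoint hdisj, card_erase_of_mem ha, card_sdiff_of_subset hCD]
    have := card_le_card hCD
    have := card_pos.2 ⟨a, ha⟩
    omega
  have hscaled : (α + β) * forestWeight z A D
      = (α + β) * ((z a + α) * (z a + α + β) ^ (#D - 1)) := by
    calc (α + β) * forestWeight z A D
        = ∑ C ∈ D.powerset, z a ^ #C * ((α + ∑ c ∈ C, z c) * (α + β) ^ (#D - #C)) := by
          rw [forestWeight_eq_sum_powerset z hAD ha, mul_sum]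
          exact sum_congr rfl fun C hC => by rw [mul_left_comm, hsmaller C hC]
      _ = α * (z a + (α + β)) ^ #D + z a * β * (z a + (α + β)) ^ (#D - 1) := by
          rw [← sum_pow_mul_eq_add_pow, ← sum_powerset_pow_mul_sum_mul_pow, mul_sum,
            ← sum_add_distrib]
          exact sum_congr rfl fun C _ => by ring
      _ = (α + β) * ((z a + α) * (z a + α + β) ^ (#D - 1)) := by
          rw [hk, Nat.add_sub_cancel]
          ring
  rw [← add_sum_erase A z ha, mul_left_cancel₀ (by positivity) hscaled, hk, Nat.add_sub_cancel]
  ring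

theorem isRootedTree_iff_isRootedForest {W : Type} [Fintype W] [DecidableEq W] {r : W}
    {p : W → W} : IsRootedTree r p ↔ IsRootedForest {r} (univ.erase r) p := by
  simp only [IsRootedTree, IsRootedForest, mem_erase, mem_univ, and_true, not_not,
    forall_eq, mem_singleton]
  exact ⟨fun h => ⟨h.1, fun v _ => h.2 v⟩,
    fun h => ⟨h.1, fun v => if hv : v = r then ⟨0, hv⟩ else h.2 v hv⟩⟩

theorem cayley_prufer (W : Type) [Fintype W] [DecidableEq W] (r : W)
    (z : W → ℝ) (hz : ∀ v, 0 < z v) :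
    (∑ p : W → W, if IsRootedTree r p then
        ∏ v ∈ Finset.univ.erase r, (z (p v) / ∑ u, z u) else 0)
      = z r / ∑ u, z u
    ∧ (2 ≤ Fintype.card W →
      (∑ p : W → W, if IsRootedTree r p then ∏ v ∈ Finset.univ.erase r, z (p v) else 0)
        = z r * (∑ u, z u) ^ (Fintype.card W - 2)) := by
  set S := ∑ u, z u
  have hS : 0 < S := sum_pos (fun v _ => hz v) ⟨r, mem_univ r⟩
  have htree : (∑ p : W → W, if IsRootedTree r p then ∏ v ∈ univ.erase r, z (p v) else 0)
      = forestWeight z {r} (univ.erase r) := by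
    simp only [forestWeight, isRootedTree_iff_isRootedForest]
  have hformula : S * forestWeight z {r} (univ.erase r) = z r * S ^ (Fintype.card W - 1) := by
    have := add_mul_forestWeight hz (disjoint_singleton_left.2 (notMem_erase r univ))
    rwa [sum_singleton, add_sum_erase _ _ (mem_univ r), card_erase_of_mem (mem_univ r),
      card_univ] at this
  refine ⟨?_, fun hcard => ?_⟩
  · have hnormalize :
        (∑ p : W → W, if IsRootedTree r p then ∏ v ∈ univ.erase r, (z (p v) / S) else 0)
          = forestWeight z {r} (univ.erase r) / S ^ (Fintype.card W - 1) := by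
      rw [← htree, sum_div]
      refine sum_congr rfl fun p _ => ?_
      rw [ite_div, zero_div, prod_div_distrib, prod_const, card_erase_of_mem (mem_univ r),
        card_univ]
    rw [hnormalize, div_eq_div_iff (by positivity) hS.ne', mul_comm, hformula]
  · rw [htree]
    apply mul_left_cancel₀ hS.ne'
    rw [hformula, mul_left_comm, ← pow_succ']
    congr 2
    omega
end
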